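/- For all positive integers n and k with k ≤ n, the signed Stirling numbers of the first kind satisfy the identity s_{n,k} = ∑_{m=k+1}^{n+1} C(m−1, k) · s_{n+1,m}, where C(m−1,k) denotes a binomial coefficient. -/

import Mathlib

/-- The number of disjoint cycles of a permutation of a finite set,
counting each fixed point as a cycle of length 1. -/
def cyclesCount {α : Type*} [Fintype α] [DecidableEq α] (σ : Equiv.Perm α) : ℕ :=
  Multiset.card σ.cycleType + (Finset.univ.filter fun x => σ x = x).card

open Equiv Equiv.Perm Finset in
lemma fixed_card {α : Type*} [Fintype α] [DecidableEq α] (σ : Equiv.Perm α) :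
    (Finset.univ.filter fun x => σ x = x).card + σ.support.card = Fintype.card α := by
  rw [Equiv.Perm.support, ← Finset.card_univ]
  have := Finset.card_filter_add_card_filter_not (s := Finset.univ)
    (p := fun x => σ x = x)
  simpa using this

open Equiv Equiv.Perm Finset in
lemma cyclesCount_swap_mul {α : Type*} [Fintype α] [DecidableEq α]
    {σ : Equiv.Perm α} {a : α} (ha : σ a ≠ a) :
    cyclesCount (Equiv.swap a (σ a) * σ) = cyclesCount σ + 1 := by
  classical
  set c := σ.cycleOf a with hc_def
  have hc : c.IsCycle := Equiv.Perm.isCycle_cycleOf σ ha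
  have hca : c a = σ a := σ.cycleOf_apply_self a
  have hcca : c (c a) = σ (σ a) := by rw [hca]; exact σ.cycleOf_apply_apply_self a
  have hmem : c ∈ σ.cycleFactorsFinset := Equiv.Perm.cycleOf_mem_cycleFactorsFinset_iff.mpr (Equiv.Perm.mem_support.mpr ha)
  have hdisj : Equiv.Perm.Disjoint c (σ * c⁻¹) :=
    (Equiv.Perm.disjoint_mul_inv_of_mem_cycleFactorsFinset hmem).symm
  set δ := σ * c⁻¹ with hδ_def
  have hσ : σ = δ * c := by rw [hδ_def, inv_mul_cancel_right]
  have hacs : a ∈ c.support := by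
    rw [hc_def, Equiv.Perm.mem_support_cycleOf_iff]
    exact ⟨Equiv.Perm.SameCycle.refl _ _, Equiv.Perm.mem_support.mpr ha⟩
  have hsacs : σ a ∈ c.support := by
    rw [hc_def, Equiv.Perm.mem_support_cycleOf_iff]
    exact ⟨⟨1, by simp⟩, Equiv.Perm.mem_support.mpr ha⟩
  have hsuppswap : (Equiv.swap a (σ a)).support ⊆ c.support := by
    rw [Equiv.Perm.support_swap (Ne.symm ha)]
    intro x hx
    simp only [Finset.mem_insert, Finset.mem_singleton] at hx
    rcases hx with rfl | rfl
    · exact hacs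
    · exact hsacs
  have hdisjsupp : _root_.Disjoint c.support δ.support :=
    Equiv.Perm.disjoint_iff_disjoint_support.mp hdisj
  have hdisj2 : Equiv.Perm.Disjoint (Equiv.swap a (σ a)) δ := by
    rw [Equiv.Perm.disjoint_iff_disjoint_support]
    exact Finset.disjoint_of_subset_left hsuppswap hdisjsupp
  have hτ : Equiv.swap a (σ a) * σ = δ * (Equiv.swap a (σ a) * c) := by
    calc Equiv.swap a (σ a) * σ = Equiv.swap a (σ a) * δ * c := by
          rw [mul_assoc, ← hσ]
    _ = δ * Equiv.swap a (σ a) * c := by rw [hdisj2.commute.eq]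
    _ = δ * (Equiv.swap a (σ a) * c) := by rw [mul_assoc]
  have hN := fixed_card σ
  have hNτ := fixed_card (Equiv.swap a (σ a) * σ)
  have hNδ := fixed_card δ
  have hTσ : σ.cycleType = δ.cycleType + c.cycleType := by
    rw [hσ, (hdisj.symm).cycleType_mul]
  have hSσ : σ.support.card = δ.support.card + c.support.card := by
    rw [hσ, (hdisj.symm).support_mul, Finset.card_union_of_disjoint hdisjsupp.symm]
  by_cases h2 : σ (σ a) = a
  · -- a lies in a 2-cycle
    have hc2 : c = Equiv.swap a (σ a) := by
      have := hc.eq_swap_of_apply_apply_eq_self (x := a) (by rw [hca]; exact ha)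
        (by rw [hcca]; exact h2)
      rwa [hca] at this
    have hτδ : Equiv.swap a (σ a) * σ = δ := by
      rw [hτ, ← hc2, hc2, Equiv.swap_mul_self, mul_one]
    have hTc : c.cycleType = {2} := by
      rw [hc2, Equiv.Perm.IsCycle.cycleType (Equiv.Perm.isCycle_swap (Ne.symm ha)),
        Equiv.Perm.support_swap (Ne.symm ha)]
      simp [Finset.card_insert_of_notMem, Ne.symm ha]
    have hSc : c.support.card = 2 := by
      rw [hc2, Equiv.Perm.support_swap (Ne.symm ha)]
      simp [Ne.symm ha]
    rw [hτδ]
    unfold cyclesCount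
    rw [hTσ, hTc] at *
    simp only [Multiset.card_add, Multiset.card_singleton] at *
    omega
  · -- a lies in a longer cycle
    have hccane : c (c a) ≠ a := by rw [hcca]; exact h2
    have hne1 : Equiv.swap a (c a) * c ≠ 1 := by
      intro h
      have : c = Equiv.swap a (c a) := by
        rw [← Equiv.swap_inv a (c a)]
        exact (inv_eq_of_mul_eq_one_right h).symm
      apply hccane
      nth_rewrite 1 [this]
      exact Equiv.swap_apply_right a (c a)
    have hc' : (Equiv.swap a (c a) * c).IsCycle :=
      hc.swap_mul (by rw [hca]; exact ha) hccane
    have hsupp' : (Equiv.swap a (c a) * c).support = c.support \ {a} :=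
      Equiv.Perm.support_swap_mul_eq c a hccane
    have hsubset : (Equiv.swap a (c a) * c).support ⊆ c.support := by
      rw [hsupp']; exact Finset.sdiff_subset
    have hcard' : (Equiv.swap a (c a) * c).support.card + 1 = c.support.card := by
      rw [hsupp', Finset.card_sdiff_of_subset (Finset.singleton_subset_iff.mpr hacs)]
      have : 1 ≤ c.support.card := Finset.card_pos.mpr ⟨a, hacs⟩
      simp
      omega
    have hdisj3 : Equiv.Perm.Disjoint δ (Equiv.swap a (c a) * c) := by
      rw [Equiv.Perm.disjoint_iff_disjoint_support]
      exact (Finset.disjoint_of_subset_left hsubset hdisjsupp).symm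
    have hτ' : Equiv.swap a (σ a) * σ = δ * (Equiv.swap a (c a) * c) := by
      rw [hτ, hca]
    have hTτ : (Equiv.swap a (σ a) * σ).cycleType
        = δ.cycleType + (Equiv.swap a (c a) * c).cycleType := by
      rw [hτ', hdisj3.cycleType_mul]
    have hSτ : (Equiv.swap a (σ a) * σ).support.card
        = δ.support.card + (Equiv.swap a (c a) * c).support.card := by
      rw [hτ', hdisj3.support_mul, Finset.card_union_of_disjoint
        (Finset.disjoint_of_subset_left hsubset hdisjsupp).symm]
    have hTc : Multiset.card c.cycleType = 1 := by
      rw [hc.cycleType]; simp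
    have hTc' : Multiset.card (Equiv.swap a (c a) * c).cycleType = 1 := by
      rw [hc'.cycleType]; simp
    unfold cyclesCount
    rw [hTσ] at *
    rw [hTτ] at *
    simp only [Multiset.card_add] at *
    omega

/-- The equivalence between `Fin n` and nonzero elements of `Fin (n+1)`. -/
def succEquiv (n : ℕ) : Fin n ≃ {x : Fin (n + 1) // x ≠ 0} where
  toFun x := ⟨x.succ, Fin.succ_ne_zero x⟩
  invFun y := y.1.pred y.2
  left_inv x := by simp
  right_inv y := by simp

lemma decompose_zero {n : ℕ} (e : Equiv.Perm (Fin n)) :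
    Equiv.Perm.decomposeFin.symm (0, e) = e.extendDomain (succEquiv n) := by
  ext x
  refine Fin.cases ?_ (fun y => ?_) x
  · rw [Equiv.Perm.decomposeFin_symm_apply_zero]
    rw [Equiv.Perm.extendDomain_apply_not_subtype]
    simp
  · rw [Equiv.Perm.decomposeFin_symm_apply_succ]
    have h1 : (y.succ : Fin (n + 1)) = ((succEquiv n) y : Fin (n + 1)) := rfl
    rw [h1, Equiv.Perm.extendDomain_apply_image]
    simp [succEquiv, Equiv.swap_self]

lemma cyclesCount_decompose_zero {n : ℕ} (e : Equiv.Perm (Fin n)) :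
    cyclesCount (Equiv.Perm.decomposeFin.symm (0, e)) = cyclesCount e + 1 := by
  unfold cyclesCount
  have hT : (Equiv.Perm.decomposeFin.symm (0, e)).cycleType = e.cycleType := by
    rw [decompose_zero]
    exact Equiv.Perm.cycleType_extendDomain (succEquiv n)
  have h0 : (Equiv.Perm.decomposeFin.symm ((0 : Fin (n+1)), e)) 0 = 0 :=
    Equiv.Perm.decomposeFin_symm_apply_zero 0 e
  have hsucc : ∀ y : Fin n,
      (Equiv.Perm.decomposeFin.symm ((0 : Fin (n+1)), e)) y.succ = (e y).succ := by
    intro y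
    rw [Equiv.Perm.decomposeFin_symm_apply_succ]
    simp [Equiv.swap_self]
  have hF : (Finset.univ.filter
        fun x => (Equiv.Perm.decomposeFin.symm ((0 : Fin (n+1)), e)) x = x).card
      = (Finset.univ.filter fun x => e x = x).card + 1 := by
    rw [Finset.card_filter, Finset.card_filter, Fin.sum_univ_succ]
    simp only [h0, hsucc, if_pos rfl]
    have : ∀ y : Fin n, ((e y).succ = y.succ) = (e y = y) := by
      intro y; simp [Fin.succ_inj]
    simp only [this, if_true]
    omega
  rw [hT, hF]
  omega

lemma cyclesCount_decompose_ne {n : ℕ} {p : Fin (n + 1)} (hp : p ≠ 0) (e : Equiv.Perm (Fin n)) :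
    cyclesCount (Equiv.Perm.decomposeFin.symm (p, e)) = cyclesCount e := by
  set σ := Equiv.Perm.decomposeFin.symm (p, e) with hσ
  have h0 : σ 0 = p := Equiv.Perm.decomposeFin_symm_apply_zero p e
  have ha : σ 0 ≠ 0 := by rw [h0]; exact hp
  have key := cyclesCount_swap_mul ha
  have hswap : Equiv.swap 0 (σ 0) * σ = Equiv.Perm.decomposeFin.symm (0, e) := by
    rw [h0]
    ext x
    refine Fin.cases ?_ (fun y => ?_) x
    · simp [h0]
    · simp only [Equiv.Perm.coe_mul, Function.comp_apply, hσ,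
        Equiv.Perm.decomposeFin_symm_apply_succ]
      rw [Equiv.swap_apply_self]
      simp [Equiv.swap_self]
  rw [hswap, cyclesCount_decompose_zero] at key
  omega

lemma cyclesCount_decompose {n : ℕ} (p : Fin (n + 1)) (e : Equiv.Perm (Fin n)) :
    cyclesCount (Equiv.Perm.decomposeFin.symm (p, e))
      = cyclesCount e + if p = 0 then 1 else 0 := by
  by_cases hp : p = 0
  · subst hp; rw [cyclesCount_decompose_zero]; simp
  · rw [cyclesCount_decompose_ne hp]; simp [hp]

/-- The unsigned Stirling number of the first kind: the number of permutations
of `{1, …, n}` with exactly `k` disjoint cycles (fixed points count as 1-cycles). -/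
def stirlingFirst (n k : ℕ) : ℕ :=
  (Finset.univ.filter fun σ : Equiv.Perm (Fin n) => cyclesCount σ = k).card

lemma stirlingFirst_rec (n k : ℕ) :
    stirlingFirst (n + 1) (k + 1) = stirlingFirst n k + n * stirlingFirst n (k + 1) := by
  classical
  have hbij : stirlingFirst (n + 1) (k + 1)
      = (Finset.univ.filter fun z : Fin (n + 1) × Equiv.Perm (Fin n) =>
          cyclesCount (Equiv.Perm.decomposeFin.symm z) = k + 1).card := by
    rw [stirlingFirst]
    refine Finset.card_nbij' (fun σ => Equiv.Perm.decomposeFin σ)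
      (fun z => Equiv.Perm.decomposeFin.symm z) ?_ ?_ ?_ ?_ <;>
      simp [Finset.mem_filter, Set.MapsTo, Set.LeftInvOn, Set.RightInvOn]
  rw [hbij, Finset.card_filter, Fintype.sum_prod_type, Fin.sum_univ_succ]
  simp only [cyclesCount_decompose, Fin.succ_ne_zero, if_neg, reduceIte,
    Fin.succ_ne_zero, add_zero]
  rw [stirlingFirst, stirlingFirst, Finset.card_filter, Finset.card_filter]
  have h1 : ∀ e : Equiv.Perm (Fin n),
      ((cyclesCount e + 1 = k + 1) : Prop) = ((cyclesCount e = k) : Prop) := by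
    intro e; simp
  simp only [h1, Finset.sum_const, Finset.card_univ, Fintype.card_fin, smul_eq_mul]

lemma stirlingFirst_zero_zero : stirlingFirst 0 0 = 1 := by
  rw [stirlingFirst, Finset.filter_true_of_mem, Finset.card_univ]
  · simp
  · intro σ _
    have hσ : σ = 1 := Subsingleton.elim σ 1
    subst hσ
    simp [cyclesCount, Equiv.Perm.cycleType_one]

lemma stirlingFirst_succ_zero (n : ℕ) : stirlingFirst (n + 1) 0 = 0 := by
  rw [stirlingFirst, Finset.card_eq_zero, Finset.filter_eq_empty_iff]
  intro σ _
  intro h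
  rw [cyclesCount, Nat.add_eq_zero] at h
  obtain ⟨h1, h2⟩ := h
  rw [Equiv.Perm.card_cycleType_eq_zero] at h1
  subst h1
  simp at h2

lemma multiset_card_le_sum (s : Multiset ℕ) (h : ∀ x ∈ s, 1 ≤ x) :
    Multiset.card s ≤ s.sum := by
  induction s using Multiset.induction with
  | empty => simp
  | cons a s ih =>
    simp only [Multiset.card_cons, Multiset.sum_cons]
    have h1 : 1 ≤ a := h a (Multiset.mem_cons_self a s)
    have h2 := ih fun x hx => h x (Multiset.mem_cons_of_mem hx)
    omega

lemma cyclesCount_le {α : Type*} [Fintype α] [DecidableEq α] (σ : Equiv.Perm α) :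
    cyclesCount σ ≤ Fintype.card α := by
  rw [cyclesCount]
  have h1 : Multiset.card σ.cycleType ≤ σ.cycleType.sum :=
    multiset_card_le_sum _ fun x hx => le_trans (by norm_num)
      (Equiv.Perm.two_le_of_mem_cycleType hx)
  have h2 := σ.sum_cycleType
  have h3 := fixed_card σ
  omega

lemma stirlingFirst_eq_zero_of_lt {n k : ℕ} (h : n < k) : stirlingFirst n k = 0 := by
  rw [stirlingFirst, Finset.card_eq_zero, Finset.filter_eq_empty_iff]
  intro σ _
  have := cyclesCount_le σ
  simp only [Fintype.card_fin] at this
  omega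

/-- The signed Stirling number of the first kind. -/
def stirlingSigned (n k : ℕ) : ℤ :=
  (-1) ^ (n - k) * stirlingFirst n k

lemma stirlingSigned_zero_zero : stirlingSigned 0 0 = 1 := by
  rw [stirlingSigned, stirlingFirst_zero_zero]; simp

lemma stirlingSigned_succ_zero (n : ℕ) : stirlingSigned (n + 1) 0 = 0 := by
  rw [stirlingSigned, stirlingFirst_succ_zero]; simp

lemma stirlingSigned_eq_zero_of_lt {n k : ℕ} (h : n < k) : stirlingSigned n k = 0 := by
  rw [stirlingSigned, stirlingFirst_eq_zero_of_lt h]; simp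

lemma stirlingSigned_rec (n k : ℕ) (h : k ≤ n) :
    stirlingSigned (n + 1) (k + 1) = stirlingSigned n k - n * stirlingSigned n (k + 1) := by
  unfold stirlingSigned
  rw [stirlingFirst_rec]
  rcases eq_or_lt_of_le h with rfl | h
  · rw [stirlingFirst_eq_zero_of_lt (lt_add_one k)]
    simp
  · have h1 : n + 1 - (k + 1) = n - k := by omega
    have h2 : n - k = (n - (k + 1)) + 1 := by omega
    rw [h1, h2]
    push_cast
    ring

open Polynomial in
noncomputable def Pst (n : ℕ) : Polynomial ℤ :=
  ∑ k ∈ Finset.range (n + 1), Polynomial.C (stirlingSigned n k) * Polynomial.X ^ k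

open Polynomial in
noncomputable def Dst (n : ℕ) : Polynomial ℤ :=
  ∏ i ∈ Finset.range n, (Polynomial.X - Polynomial.C (i : ℤ))

open Polynomial in
lemma C_mul_s0 (n : ℕ) : Polynomial.C (n : ℤ) * Polynomial.C (stirlingSigned n 0) = 0 := by
  cases n with
  | zero => simp
  | succ m => rw [stirlingSigned_succ_zero]; simp

open Polynomial Finset in
lemma Pst_succ (n : ℕ) : Pst (n + 1) = (X - C (n : ℤ)) * Pst n := by
  have hA : ∑ k ∈ range (n + 1), C (stirlingSigned n k) * X ^ (k + 1) = X * Pst n := by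
    unfold Pst
    rw [Finset.mul_sum]
    exact Finset.sum_congr rfl fun k _ => by ring
  have hB : ∑ k ∈ range (n + 1), C (stirlingSigned n (k + 1)) * X ^ (k + 1)
      = Pst n - C (stirlingSigned n 0) := by
    have h2 : ∑ k ∈ range (n + 2), C (stirlingSigned n k) * X ^ k = Pst n := by
      rw [Finset.sum_range_succ, stirlingSigned_eq_zero_of_lt (by omega)]
      unfold Pst
      simp
    have h3 := Finset.sum_range_succ' (fun k => C (stirlingSigned n k) * X ^ k) (n + 1)
    rw [h2] at h3
    simp only [pow_zero, mul_one] at h3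
    rw [h3]
    ring
  calc Pst (n + 1)
      = ∑ k ∈ range (n + 1), C (stirlingSigned (n + 1) (k + 1)) * X ^ (k + 1) := by
        unfold Pst
        rw [Finset.sum_range_succ' (fun k => C (stirlingSigned (n+1) k) * X ^ k) (n + 1),
          stirlingSigned_succ_zero]
        simp
    _ = ∑ k ∈ range (n + 1), (C (stirlingSigned n k) * X ^ (k + 1)
          - C (n : ℤ) * (C (stirlingSigned n (k + 1)) * X ^ (k + 1))) := by
        refine Finset.sum_congr rfl fun k hk => ?_
        rw [stirlingSigned_rec n k (by simpa [Nat.lt_succ_iff] using hk)]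
        rw [map_sub, map_mul]
        ring
    _ = X * Pst n - C (n : ℤ) * (Pst n - C (stirlingSigned n 0)) := by
        rw [Finset.sum_sub_distrib, hA, ← Finset.mul_sum, hB]
    _ = (X - C (n : ℤ)) * Pst n := by
        rw [mul_sub, C_mul_s0, sub_zero]
        ring

open Polynomial in
lemma Pst_eq_Dst (n : ℕ) : Pst n = Dst n := by
  induction n with
  | zero =>
    unfold Pst Dst
    simp [stirlingSigned_zero_zero]
  | succ m ih =>
    rw [Pst_succ, ih]
    unfold Dst
    rw [Finset.prod_range_succ]
    ring

open Polynomial Finset in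
lemma Dst_comp (n : ℕ) :
    (Dst (n + 1)).comp (X + 1) = (X + 1) * Dst n := by
  unfold Dst
  rw [Polynomial.prod_comp]
  simp only [sub_comp, X_comp, C_comp]
  have h := Finset.prod_range_succ' (fun i => (X : Polynomial ℤ) + 1 - C (i : ℤ)) n
  rw [h]
  have hs : ∀ i : ℕ, (X : Polynomial ℤ) + 1 - C ((i + 1 : ℕ) : ℤ) = X - C (i : ℤ) := by
    intro i
    have h2 : ((i + 1 : ℕ) : ℤ) = (i : ℤ) + 1 := by push_cast; ring
    rw [h2, map_add, map_one]
    ring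
  rw [Finset.prod_congr rfl fun i _ => hs i]
  simp
  ring

open Polynomial Finset in
noncomputable def Qst (n : ℕ) : Polynomial ℤ :=
  ∑ m ∈ Finset.Icc 1 (n + 1), Polynomial.C (stirlingSigned (n + 1) m) * Polynomial.X ^ (m - 1)

open Polynomial Finset in
lemma X_mul_Qst (n : ℕ) : X * Qst n = Pst (n + 1) := by
  unfold Qst
  rw [Finset.mul_sum]
  have h1 : ∀ m ∈ Finset.Icc 1 (n + 1),
      X * (C (stirlingSigned (n + 1) m) * X ^ (m - 1))
        = C (stirlingSigned (n + 1) m) * X ^ m := by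
    intro m hm
    rw [Finset.mem_Icc] at hm
    have : m - 1 + 1 = m := by omega
    calc X * (C (stirlingSigned (n + 1) m) * X ^ (m - 1))
        = C (stirlingSigned (n + 1) m) * X ^ (m - 1 + 1) := by ring
      _ = C (stirlingSigned (n + 1) m) * X ^ m := by rw [this]
  rw [Finset.sum_congr rfl h1]
  unfold Pst
  have h2 : Finset.range (n + 2) = Finset.Icc 0 (n + 1) := by
    rw [← Finset.Ico_add_one_right_eq_Icc, Nat.Ico_zero_eq_range]; rfl
  rw [h2]
  have h3 : Finset.Icc 0 (n + 1) = insert 0 (Finset.Icc 1 (n + 1)) := by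
    ext x
    simp [Finset.mem_Icc, Finset.mem_insert]
    omega
  rw [h3, Finset.sum_insert (by simp)]
  rw [stirlingSigned_succ_zero]
  simp

open Polynomial Finset in
lemma Qst_comp (n : ℕ) : (Qst n).comp (X + 1) = Pst n := by
  have hXne : (X + 1 : Polynomial ℤ) ≠ 0 := by
    have := Polynomial.X_add_C_ne_zero (1 : ℤ)
    simpa using this
  refine mul_left_cancel₀ hXne ?_
  calc (X + 1) * (Qst n).comp (X + 1)
      = (X * Qst n).comp (X + 1) := by rw [mul_comp, X_comp]
    _ = (Pst (n + 1)).comp (X + 1) := by rw [X_mul_Qst]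
    _ = (Dst (n + 1)).comp (X + 1) := by rw [Pst_eq_Dst]
    _ = (X + 1) * Dst n := Dst_comp n
    _ = (X + 1) * Pst n := by rw [Pst_eq_Dst]

open Polynomial Finset in
lemma coeff_Pst (n k : ℕ) (h : k ≤ n) : (Pst n).coeff k = stirlingSigned n k := by
  unfold Pst
  rw [Polynomial.finset_sum_coeff]
  simp only [Polynomial.coeff_C_mul, Polynomial.coeff_X_pow, mul_ite, mul_one, mul_zero]
  rw [Finset.sum_ite_eq (Finset.range (n + 1)) k (fun j => stirlingSigned n j)]
  simp [Finset.mem_range, Nat.lt_succ_iff, h]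

open Polynomial Finset in
lemma coeff_Qst_comp (n k : ℕ) :
    ((Qst n).comp (X + 1)).coeff k
      = ∑ m ∈ Finset.Icc 1 (n + 1), stirlingSigned (n + 1) m * ((m - 1).choose k : ℤ) := by
  unfold Qst
  rw [Polynomial.sum_comp]
  simp only [mul_comp, C_comp, pow_comp, X_comp]
  rw [Polynomial.finset_sum_coeff]
  refine Finset.sum_congr rfl fun m _ => ?_
  rw [Polynomial.coeff_C_mul, Polynomial.coeff_X_add_one_pow]

theorem stirling_identity (n k : ℕ) (hk : 1 ≤ k) (hkn : k ≤ n) :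
    stirlingSigned n k =
      ∑ m ∈ Finset.Icc (k + 1) (n + 1),
        ((m - 1).choose k : ℤ) * stirlingSigned (n + 1) m := by
  have h1 : stirlingSigned n k = ((Qst n).comp (Polynomial.X + 1)).coeff k := by
    rw [Qst_comp, coeff_Pst n k hkn]
  rw [h1, coeff_Qst_comp]
  rw [← Finset.sum_subset (s₁ := Finset.Icc (k + 1) (n + 1)) (s₂ := Finset.Icc 1 (n + 1))
    (by apply Finset.Icc_subset_Icc_left; omega) ?_]
  · exact Finset.sum_congr rfl fun m _ => mul_comm _ _
  · intro m hm hnot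
    rw [Finset.mem_Icc] at hm
    rw [Finset.mem_Icc, not_and_or] at hnot
    have hmk : m ≤ k := by omega
    have : (m - 1).choose k = 0 := Nat.choose_eq_zero_of_lt (by omega)
    rw [this]
    simp
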